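/- Let s > 0 and let f : ℝ → ℝ be continuously differentiable on [0,1]. Then the double integral below converges absolutely and ∫₀¹ β_s(θ) ∫₀¹ u^{−1}(1−u)^{2s−1} [ f((1−u)θ) + f(u + (1−u)θ) − 2 f(θ) ] du dθ = 0, where β_s(θ) = θ^{2s−1}(1−θ)^{2s−1}/B(2s,2s). In other words, the Beta(2s,2s) distribution is stationary for the single-site hidden-parameter model of the generalized harmonic process with parameter s coupled to reservoirs with parameters θ_L = 0 and θ_R = 1. -/

import Mathlib

/-!
With `p = 2s - 1`, the substitutions `y = u + (1 - u)θ` (jumps towards the reservoir at `1`) and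
`x = (1 - u)θ` (jumps towards the reservoir at `0`) turn `θ^p (1 - θ)^p` times the generator
into `∫_θ^1 K(θ, y) dy - ∫_0^θ K(x, θ) dx` for one and the same kernel
`K(x, y) = x^p (1 - y)^p (f y - f x) / (y - x)` on the triangle `0 < x < y < 1`.
By Fubini on the triangle both terms integrate in `θ` to `∬ K`, so they cancel.
Integrability comes from `f` being Lipschitz: each jump is `O(u)`, which absorbs `u⁻¹`.
-/

open MeasureTheory Real Set

/-- The Beta(2s,2s) density on (0,1). -/
noncomputable def betaDens (s θ : ℝ) : ℝ :=
  θ ^ (2 * s - 1) * (1 - θ) ^ (2 * s - 1) /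
    ∫ v in Set.Ioo (0 : ℝ) 1, v ^ (2 * s - 1) * (1 - v) ^ (2 * s - 1)

open scoped NNReal

noncomputable def betaWeight (p θ : ℝ) : ℝ := θ ^ p * (1 - θ) ^ p

theorem intervalIntegrable_one_sub_rpow {p : ℝ} (hp : -1 < p) (a b : ℝ) :
    IntervalIntegrable (fun x => (1 - x) ^ p) volume a b := by
  simpa using
    (intervalIntegral.intervalIntegrable_rpow' hp (a := 1 - a) (b := 1 - b)).comp_sub_left 1

theorem integrableOn_betaWeight {p : ℝ} (hp : -1 < p) :
    IntegrableOn (betaWeight p) (Ioo 0 1) := by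
  have hleft : IntegrableOn (betaWeight p) (Ioc 0 (1 / 2)) := by
    refine (intervalIntegral.intervalIntegrable_rpow' hp).1.mul_continuousOn_of_subset
      (K := Icc 0 (1 / 2)) ?_ measurableSet_Ioc isCompact_Icc Ioc_subset_Icc_self
    exact ContinuousOn.rpow_const (f := fun x => 1 - x) (by fun_prop) fun x hx =>
      Or.inl (by linarith [hx.2])
  have hright : IntegrableOn (betaWeight p) (Ioo (1 / 2) 1) := by
    refine IntegrableOn.continuousOn_mul_of_subset (K := Icc (1 / 2) 1) ?_
      ((intervalIntegrable_one_sub_rpow hp _ _).1.mono_set Ioo_subset_Ioc_self) isCompact_Icc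
      measurableSet_Ioo Ioo_subset_Icc_self
    exact ContinuousOn.rpow_const (f := fun x => x) (by fun_prop) fun x hx =>
      Or.inl (by linarith [hx.1])
  refine (hleft.union hright).mono_set fun x hx => ?_
  rcases le_or_gt x (1 / 2) with h | h
  exacts [Or.inl ⟨hx.1, h⟩, Or.inr ⟨h, hx.2⟩]

theorem integral_Ioo_comp_add_mul (g : ℝ → ℝ) {c : ℝ} (hc : 0 < c) (d : ℝ) :
    ∫ u in Ioo 0 1, g (d + c * u) = c⁻¹ * ∫ y in Ioo d (d + c), g y := by
  have h := intervalIntegral.integral_comp_add_mul g hc.ne' d (a := 0) (b := 1)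
  rw [intervalIntegral.integral_of_le zero_le_one,
    intervalIntegral.integral_of_le (by linarith)] at h
  simpa [integral_Ioc_eq_integral_Ioo] using h

theorem integral_Ioo_comp_sub_mul (g : ℝ → ℝ) {c : ℝ} (hc : 0 < c) (d : ℝ) :
    ∫ u in Ioo 0 1, g (d - c * u) = c⁻¹ * ∫ y in Ioo (d - c) d, g y := by
  have h := intervalIntegral.integral_comp_sub_mul g hc.ne' d (a := 0) (b := 1)
  rw [intervalIntegral.integral_of_le zero_le_one,
    intervalIntegral.integral_of_le (by linarith)] at h
  simpa [integral_Ioc_eq_integral_Ioo] using h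

noncomputable def jumpKernel (p : ℝ) (f : ℝ → ℝ) (z : ℝ × ℝ) : ℝ :=
  z.1 ^ p * (1 - z.2) ^ p * (f z.2 - f z.1) / (z.2 - z.1)

theorem betaWeight_mul_integral_rightJump {p θ : ℝ} (hθ : θ < 1) (f : ℝ → ℝ) :
    betaWeight p θ * ∫ u in Ioo 0 1, u⁻¹ * (1 - u) ^ p * (f (u + (1 - u) * θ) - f θ)
      = ∫ y in Ioo θ 1, jumpKernel p f (θ, y) := by
  have h1θ : 0 < 1 - θ := by linarith
  set G : ℝ → ℝ := fun y => ((y - θ) / (1 - θ))⁻¹ * ((1 - y) / (1 - θ)) ^ p * (f y - f θ)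
  have hG : ∀ u, u⁻¹ * (1 - u) ^ p * (f (u + (1 - u) * θ) - f θ) = G (θ + (1 - θ) * u) := by
    intro u
    have e1 : (θ + (1 - θ) * u - θ) / (1 - θ) = u := by field_simp; ring
    have e2 : (1 - (θ + (1 - θ) * u)) / (1 - θ) = 1 - u := by field_simp; ring
    have e3 : θ + (1 - θ) * u = u + (1 - u) * θ := by ring
    simp only [G]
    rw [e1, e2, e3]
  simp_rw [hG]
  rw [integral_Ioo_comp_add_mul G h1θ, add_sub_cancel, ← mul_assoc, ← integral_const_mul]
  refine setIntegral_congr_fun measurableSet_Ioo fun y hy => ?_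
  have hyθ : 0 < y - θ := by linarith [hy.1]
  simp only [G, jumpKernel, betaWeight]
  rw [div_rpow (by linarith [hy.2]) h1θ.le]
  have : (1 - θ) ^ p ≠ 0 := (rpow_pos_of_pos h1θ p).ne'
  field_simp

theorem betaWeight_mul_integral_leftJump {p θ : ℝ} (hθ : 0 < θ) (f : ℝ → ℝ) :
    betaWeight p θ * ∫ u in Ioo 0 1, u⁻¹ * (1 - u) ^ p * (f θ - f ((1 - u) * θ))
      = ∫ x in Ioo 0 θ, jumpKernel p f (x, θ) := by
  set G : ℝ → ℝ := fun x => ((θ - x) / θ)⁻¹ * (x / θ) ^ p * (f θ - f x)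
  have hG : ∀ u, u⁻¹ * (1 - u) ^ p * (f θ - f ((1 - u) * θ)) = G (θ - θ * u) := by
    intro u
    have e1 : (θ - (θ - θ * u)) / θ = u := by field_simp; ring
    have e2 : (θ - θ * u) / θ = 1 - u := by field_simp
    have e3 : θ - θ * u = (1 - u) * θ := by ring
    simp only [G]
    rw [e1, e2, e3]
  simp_rw [hG]
  rw [integral_Ioo_comp_sub_mul G hθ, sub_self, ← mul_assoc, ← integral_const_mul]
  refine setIntegral_congr_fun measurableSet_Ioo fun x hx => ?_
  have hθx : 0 < θ - x := by linarith [hx.2]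
  simp only [G, jumpKernel, betaWeight]
  rw [div_rpow hx.1.le hθ.le]
  have : θ ^ p ≠ 0 := (rpow_pos_of_pos hθ p).ne'
  field_simp

theorem integral_Ioo_integral_Ioo_swap {a b : ℝ} {K : ℝ × ℝ → ℝ}
    (hK : IntegrableOn K {z | a < z.1 ∧ z.1 < z.2 ∧ z.2 < b}) :
    ∫ x in Ioo a b, ∫ y in Ioo x b, K (x, y) = ∫ y in Ioo a b, ∫ x in Ioo a y, K (x, y) := by
  set ν := volume.restrict (Ioo a b)
  set T : Set (ℝ × ℝ) := {z | z.1 < z.2}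
  have hT : MeasurableSet T := measurableSet_lt measurable_fst measurable_snd
  have hint : Integrable (T.indicator K) (ν.prod ν) := by
    have htri : T ∩ Ioo a b ×ˢ Ioo a b = {z | a < z.1 ∧ z.1 < z.2 ∧ z.2 < b} := by
      ext z
      simp only [T, mem_inter_iff, mem_ofPred_eq, mem_prod, mem_Ioo]
      constructor
      · rintro ⟨h12, ⟨ha, -⟩, -, hb⟩; exact ⟨ha, h12, hb⟩
      · rintro ⟨ha, h12, hb⟩; exact ⟨h12, ⟨ha, h12.trans hb⟩, ha.trans h12, hb⟩
    rw [integrable_indicator_iff hT, IntegrableOn, Measure.prod_restrict,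
      ← Measure.volume_eq_prod, Measure.restrict_restrict hT, htri]
    exact hK
  have hrow : ∀ x ∈ Ioo a b, ∫ y, T.indicator K (x, y) ∂ν = ∫ y in Ioo x b, K (x, y) := by
    intro x hx
    have hset : Ioi x ∩ Ioo a b = Ioo x b := by
      ext y
      simp only [mem_inter_iff, mem_Ioi, mem_Ioo]
      constructor
      · rintro ⟨hxy, -, hyb⟩; exact ⟨hxy, hyb⟩
      · rintro ⟨hxy, hyb⟩; exact ⟨hxy, hx.1.trans hxy, hyb⟩
    rw [← hset, ← Measure.restrict_restrict measurableSet_Ioi,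
      ← integral_indicator measurableSet_Ioi]
    rfl
  have hcol : ∀ y ∈ Ioo a b, ∫ x, T.indicator K (x, y) ∂ν = ∫ x in Ioo a y, K (x, y) := by
    intro y hy
    have hset : Iio y ∩ Ioo a b = Ioo a y := by
      rw [Iio_inter_Ioo, min_eq_left hy.2.le]
    rw [← hset, ← Measure.restrict_restrict measurableSet_Iio,
      ← integral_indicator measurableSet_Iio]
    rfl
  calc ∫ x in Ioo a b, ∫ y in Ioo x b, K (x, y)
      = ∫ x, ∫ y, T.indicator K (x, y) ∂ν ∂ν :=
        (setIntegral_congr_fun measurableSet_Ioo hrow).symm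
    _ = ∫ y, ∫ x, T.indicator K (x, y) ∂ν ∂ν := by
        rw [← integral_prod _ hint, integral_prod_symm _ hint]
    _ = ∫ y in Ioo a b, ∫ x in Ioo a y, K (x, y) :=
        setIntegral_congr_fun measurableSet_Ioo hcol

theorem integrableOn_jumpKernel {p : ℝ} (hp : -1 < p) {L : ℝ≥0} {f : ℝ → ℝ}
    (hf : LipschitzWith L f) :
    IntegrableOn (jumpKernel p f) {z | 0 < z.1 ∧ z.1 < z.2 ∧ z.2 < 1} := by
  have hdom : IntegrableOn (fun z : ℝ × ℝ => L * z.1 ^ p * (1 - z.2) ^ p)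
      (Ioo 0 1 ×ˢ Ioo 0 1) := by
    rw [IntegrableOn, Measure.volume_eq_prod, ← Measure.prod_restrict]
    exact (((intervalIntegral.integrableOn_Ioo_rpow_iff one_pos).2 hp).const_mul (L : ℝ)).mul_prod
      ((intervalIntegrable_one_sub_rpow hp 0 1).1.mono_set Ioo_subset_Ioc_self)
  have hmeas : MeasurableSet {z : ℝ × ℝ | 0 < z.1 ∧ z.1 < z.2 ∧ z.2 < 1} := by
    measurability
  refine Integrable.mono' (hdom.mono_set fun z hz => ⟨⟨hz.1, hz.2.1.trans hz.2.2⟩,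
    hz.1.trans hz.2.1, hz.2.2⟩) ?_ ((ae_restrict_iff' hmeas).2 (ae_of_all _ fun z hz => ?_))
  · have hfm : Measurable f := hf.continuous.measurable
    exact (Measurable.aestronglyMeasurable (by unfold jumpKernel; fun_prop))
  · obtain ⟨h0, h12, h1⟩ := hz
    have hlip : |f z.2 - f z.1| ≤ L * |z.2 - z.1| := by
      simpa only [Real.norm_eq_abs] using hf.norm_sub_le z.2 z.1
    rw [abs_of_pos (sub_pos.2 h12)] at hlip
    rw [Real.norm_eq_abs, jumpKernel, abs_div, abs_mul, abs_of_pos (sub_pos.2 h12),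
      abs_of_nonneg (by positivity), div_le_iff₀ (sub_pos.2 h12)]
    calc z.1 ^ p * (1 - z.2) ^ p * |f z.2 - f z.1|
        ≤ z.1 ^ p * (1 - z.2) ^ p * (L * (z.2 - z.1)) := by gcongr
      _ = L * z.1 ^ p * (1 - z.2) ^ p * (z.2 - z.1) := by ring

theorem integrableOn_betaWeight_mul_of_abs_le {p C : ℝ} (hp : -1 < p) {φ : ℝ × ℝ → ℝ}
    (hφm : Measurable φ) (hφ : ∀ q ∈ Ioo 0 1 ×ˢ Ioo 0 1, |φ q| ≤ C * q.2) :
    IntegrableOn (fun q => betaWeight p q.1 * (q.2⁻¹ * (1 - q.2) ^ p * φ q))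
      (Ioo 0 1 ×ˢ Ioo 0 1) := by
  have hdom : IntegrableOn (fun q : ℝ × ℝ => betaWeight p q.1 * (C * (1 - q.2) ^ p))
      (Ioo 0 1 ×ˢ Ioo 0 1) := by
    rw [IntegrableOn, Measure.volume_eq_prod, ← Measure.prod_restrict]
    exact (integrableOn_betaWeight hp).mul_prod
      (((intervalIntegrable_one_sub_rpow hp 0 1).1.mono_set Ioo_subset_Ioc_self).const_mul C)
  refine Integrable.mono' hdom ?_ ((ae_restrict_iff' (measurableSet_Ioo.prod measurableSet_Ioo)).2
    (ae_of_all _ fun q hq => ?_))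
  · exact (Measurable.aestronglyMeasurable (by unfold betaWeight; fun_prop))
  · have hu0 : 0 < q.2 := hq.2.1
    have hw : 0 ≤ betaWeight p q.1 := by
      unfold betaWeight; have := hq.1.1; have := hq.1.2; positivity
    have hk : 0 ≤ (1 - q.2) ^ p := rpow_nonneg (by linarith [hq.2.2]) p
    rw [Real.norm_eq_abs, abs_mul, abs_mul, abs_mul, abs_of_nonneg hw, abs_of_nonneg hk,
      abs_inv, abs_of_pos hu0]
    refine mul_le_mul_of_nonneg_left ?_ hw
    calc q.2⁻¹ * (1 - q.2) ^ p * |φ q| ≤ q.2⁻¹ * (1 - q.2) ^ p * (C * q.2) := by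
          gcongr; exact hφ q hq
      _ = C * (1 - q.2) ^ p := by field_simp

theorem abs_rightJump_le {L : ℝ≥0} {f : ℝ → ℝ} (hf : LipschitzWith L f) {θ u : ℝ}
    (hθ : θ ∈ Icc 0 1) (hu : 0 ≤ u) : |f (u + (1 - u) * θ) - f θ| ≤ L * u := by
  calc |f (u + (1 - u) * θ) - f θ| ≤ L * |u + (1 - u) * θ - θ| := by
        simpa only [Real.norm_eq_abs] using hf.norm_sub_le _ _
    _ = L * (u * (1 - θ)) := by
        rw [show u + (1 - u) * θ - θ = u * (1 - θ) by ring,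
          abs_of_nonneg (mul_nonneg hu (by linarith [hθ.2]))]
    _ ≤ L * u := by gcongr; nlinarith [hθ.1]

theorem abs_leftJump_le {L : ℝ≥0} {f : ℝ → ℝ} (hf : LipschitzWith L f) {θ u : ℝ}
    (hθ : θ ∈ Icc 0 1) (hu : 0 ≤ u) : |f θ - f ((1 - u) * θ)| ≤ L * u := by
  calc |f θ - f ((1 - u) * θ)| ≤ L * |θ - (1 - u) * θ| := by
        simpa only [Real.norm_eq_abs] using hf.norm_sub_le _ _
    _ = L * (u * θ) := by
        rw [show θ - (1 - u) * θ = u * θ by ring, abs_of_nonneg (mul_nonneg hu hθ.1)]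
    _ ≤ L * u := by gcongr; nlinarith [hθ.2]

noncomputable def reservoirJump (f : ℝ → ℝ) (θ u : ℝ) : ℝ :=
  f ((1 - u) * θ) + f (u + (1 - u) * θ) - 2 * f θ

theorem abs_reservoirJump_le {L : ℝ≥0} {f : ℝ → ℝ} (hf : LipschitzWith L f) {θ u : ℝ}
    (hθ : θ ∈ Icc 0 1) (hu : 0 ≤ u) : |reservoirJump f θ u| ≤ 2 * L * u := by
  calc |reservoirJump f θ u| = |(f (u + (1 - u) * θ) - f θ) - (f θ - f ((1 - u) * θ))| := by
        rw [reservoirJump]; ring_nf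
    _ ≤ |f (u + (1 - u) * θ) - f θ| + |f θ - f ((1 - u) * θ)| := abs_sub _ _
    _ ≤ L * u + L * u := add_le_add (abs_rightJump_le hf hθ hu) (abs_leftJump_le hf hθ hu)
    _ = 2 * L * u := by ring

theorem reservoirJump_congr {f g : ℝ → ℝ} (hfg : EqOn f g (Icc 0 1)) {θ u : ℝ}
    (hθ : θ ∈ Icc 0 1) (hu : u ∈ Icc 0 1) : reservoirJump f θ u = reservoirJump g θ u := by
  obtain ⟨hθ0, hθ1⟩ := hθ
  obtain ⟨hu0, hu1⟩ := hu
  have hleft : (1 - u) * θ ∈ Icc (0 : ℝ) 1 := ⟨by nlinarith, by nlinarith⟩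
  have hright : u + (1 - u) * θ ∈ Icc (0 : ℝ) 1 := ⟨by nlinarith, by nlinarith⟩
  rw [reservoirJump, reservoirJump, hfg hleft, hfg hright, hfg ⟨hθ0, hθ1⟩]

theorem integral_betaWeight_mul_integral_reservoirJump {p : ℝ} (hp : -1 < p) {L : ℝ≥0}
    {f : ℝ → ℝ} (hf : LipschitzWith L f) :
    ∫ θ in Ioo 0 1, betaWeight p θ * ∫ u in Ioo 0 1, u⁻¹ * (1 - u) ^ p * reservoirJump f θ u
      = 0 := by
  have hfm : Measurable f := hf.continuous.measurable
  have hsq : ∀ q ∈ Ioo (0 : ℝ) 1 ×ˢ Ioo (0 : ℝ) 1, q.1 ∈ Icc (0 : ℝ) 1 ∧ 0 ≤ q.2 :=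
    fun q hq => ⟨Ioo_subset_Icc_self hq.1, hq.2.1.le⟩
  set R : ℝ × ℝ → ℝ := fun q =>
    betaWeight p q.1 * (q.2⁻¹ * (1 - q.2) ^ p * (f (q.2 + (1 - q.2) * q.1) - f q.1))
  set Λ : ℝ × ℝ → ℝ := fun q =>
    betaWeight p q.1 * (q.2⁻¹ * (1 - q.2) ^ p * (f q.1 - f ((1 - q.2) * q.1)))
  have hR : IntegrableOn R (Ioo 0 1 ×ˢ Ioo 0 1) :=
    integrableOn_betaWeight_mul_of_abs_le hp (by fun_prop)
      fun q hq => abs_rightJump_le hf (hsq q hq).1 (hsq q hq).2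
  have hΛ : IntegrableOn Λ (Ioo 0 1 ×ˢ Ioo 0 1) :=
    integrableOn_betaWeight_mul_of_abs_le hp (by fun_prop)
      fun q hq => abs_leftJump_le hf (hsq q hq).1 (hsq q hq).2
  calc ∫ θ in Ioo 0 1, betaWeight p θ * ∫ u in Ioo 0 1, u⁻¹ * (1 - u) ^ p * reservoirJump f θ u
      = ∫ q in Ioo 0 1 ×ˢ Ioo 0 1, (R q - Λ q) := by
        rw [Measure.volume_eq_prod, setIntegral_prod (fun q => R q - Λ q) (hR.sub hΛ)]
        refine setIntegral_congr_fun measurableSet_Ioo fun θ _ => ?_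
        rw [← integral_const_mul]
        congr 1 with u
        simp only [R, Λ, reservoirJump]
        ring
    _ = (∫ q in Ioo 0 1 ×ˢ Ioo 0 1, R q) - ∫ q in Ioo 0 1 ×ˢ Ioo 0 1, Λ q := integral_sub hR hΛ
    _ = (∫ θ in Ioo 0 1, ∫ y in Ioo θ 1, jumpKernel p f (θ, y))
          - ∫ y in Ioo 0 1, ∫ x in Ioo 0 y, jumpKernel p f (x, y) := by
        rw [Measure.volume_eq_prod, setIntegral_prod _ hR, setIntegral_prod _ hΛ]
        congr 1 <;> refine setIntegral_congr_fun measurableSet_Ioo fun θ hθ => ?_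
        · rw [← betaWeight_mul_integral_rightJump hθ.2, ← integral_const_mul]
        · rw [← betaWeight_mul_integral_leftJump hθ.1, ← integral_const_mul]
    _ = 0 := by rw [integral_Ioo_integral_Ioo_swap (integrableOn_jumpKernel hp hf), sub_self]

/-- The Beta(2s,2s) distribution is stationary for the single-site hidden-parameter model
of the generalized harmonic process with parameter `s` coupled to reservoirs with
parameters `θ_L = 0` and `θ_R = 1`. -/
theorem beta_stationary_single_site (s : ℝ) (hs : 0 < s)
    (f : ℝ → ℝ) (hf : ContDiffOn ℝ 1 f (Set.Icc 0 1)) :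
    IntegrableOn (fun q : ℝ × ℝ =>
      betaDens s q.1 * (q.2⁻¹ * (1 - q.2) ^ (2 * s - 1) *
        (f ((1 - q.2) * q.1) + f (q.2 + (1 - q.2) * q.1) - 2 * f q.1)))
      (Set.Ioo 0 1 ×ˢ Set.Ioo 0 1) volume ∧
    (∫ θ in Set.Ioo (0:ℝ) 1, betaDens s θ * ∫ u in Set.Ioo (0:ℝ) 1,
      u⁻¹ * (1 - u) ^ (2 * s - 1) *
        (f ((1 - u) * θ) + f (u + (1 - u) * θ) - 2 * f θ)) = 0 := by
  have hp : -1 < 2 * s - 1 := by linarith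
  obtain ⟨L, hL⟩ := hf.exists_lipschitzOnWith one_ne_zero (convex_Icc 0 1) isCompact_Icc
  -- all arguments of `f` lie in `[0, 1]`, so `f` may be replaced by a global Lipschitz extension
  obtain ⟨g, hg, hfg⟩ := hL.extend_real
  have hjump : ∀ θ ∈ Ioo (0 : ℝ) 1, ∀ u ∈ Ioo (0 : ℝ) 1,
      reservoirJump f θ u = reservoirJump g θ u := fun θ hθ u hu =>
    reservoirJump_congr hfg (Ioo_subset_Icc_self hθ) (Ioo_subset_Icc_self hu)
  have hgm : Measurable g := hg.continuous.measurable
  set M := ∫ v in Ioo 0 1, betaWeight (2 * s - 1) v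
  have hdens : ∀ θ, betaDens s θ = betaWeight (2 * s - 1) θ / M := fun _ => rfl
  refine ⟨?_, ?_⟩
  · refine IntegrableOn.congr_fun ((integrableOn_betaWeight_mul_of_abs_le hp
      (by unfold reservoirJump; fun_prop) fun q hq =>
        abs_reservoirJump_le hg (Ioo_subset_Icc_self hq.1) hq.2.1.le).div_const M)
      (fun q hq => ?_) (measurableSet_Ioo.prod measurableSet_Ioo)
    change _ = betaDens s q.1 * (_ * reservoirJump f q.1 q.2)
    rw [hdens, hjump q.1 hq.1 q.2 hq.2, div_mul_eq_mul_div]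
  · have hintegrand : ∀ θ ∈ Ioo (0 : ℝ) 1,
        betaDens s θ * ∫ u in Ioo 0 1, u⁻¹ * (1 - u) ^ (2 * s - 1) * reservoirJump f θ u
          = (betaWeight (2 * s - 1) θ * ∫ u in Ioo 0 1,
              u⁻¹ * (1 - u) ^ (2 * s - 1) * reservoirJump g θ u) / M := fun θ hθ => by
      rw [hdens, div_mul_eq_mul_div, setIntegral_congr_fun measurableSet_Ioo fun u hu => by
        rw [hjump θ hθ u hu]]
    refine (setIntegral_congr_fun measurableSet_Ioo hintegrand).trans ?_
    rw [integral_div, integral_betaWeight_mul_integral_reservoirJump hp hg, zero_div]
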